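/- arXiv:1708.08577 — 9 statements merged into one kernel-verified Lean document; each statement's English description precedes it below -/
import Mathlib

section
/- Let R_{1212}, R_{1313}, R_{2323}, R_{1213}, R_{1223}, R_{1323} ∈ ℝ with R_{1223} = R_{1323} = 0, R_{1212} ≠ 0 and R_{2323} ≠ 0, and set S := (R_{1212}·R_{1313} − R_{1213}²)/R_{2323}. Then a solution of the Gauss equation in codimension 1 exists if and only if S > 0; moreover, every solution h_{ij} satisfies h_{12} = h_{13} = 0, h_{11}² = S, h_{11}·h_{22} = R_{1212}, h_{11}·h_{33} = R_{1313}, and h_{11}·h_{23} = R_{1213} (so the solution is unique up to overall sign). -/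
/-!
With `R1223 = R1323 = 0`, the last two equations say that `(h12, h13)` lies in the kernel of the
matrix `[[h33, -h23], [-h23, h22]]`, whose determinant is `R2323 ≠ 0`; so `h12 = h13 = 0`. The
remaining equations then read `h11 h22 = R1212`, `h11 h33 = R1313`, `h11 h23 = R1213`, whence
`h11² R2323 = R1212 R1313 - R1213²`, i.e. `h11² = S`. Conversely, for `S > 0` the diagonal-block
matrix with `h11 = √S` and `(h22, h23, h33) = (R1212, R1213, R1313) / √S` is a solution.
-/

/-- A solution of the Gauss equation in codimension 1 exists for the given curvature
components. (The family `h i j` is encoded by the six entries `h11, h12, h13, h22,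
h23, h33`, symmetry `h i j = h j i` being automatic.) -/
def GaussSolvable (R1212 R1313 R2323 R1213 R1223 R1323 : ℝ) : Prop :=
  ∃ h11 h12 h13 h22 h23 h33 : ℝ,
    h11 * h22 - h12 ^ 2 = R1212 ∧
    h11 * h33 - h13 ^ 2 = R1313 ∧
    h22 * h33 - h23 ^ 2 = R2323 ∧
    h11 * h23 - h13 * h12 = R1213 ∧
    h12 * h23 - h13 * h22 = R1223 ∧
    h12 * h33 - h13 * h23 = R1323

section Field

variable {K : Type*} [Field K] {R1212 R1313 R2323 R1213 h11 h12 h13 h22 h23 h33 : K}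

theorem eq_zero_of_gauss_of_det_ne_zero (hR : R2323 ≠ 0) (e3 : h22 * h33 - h23 ^ 2 = R2323)
    (e5 : h12 * h23 - h13 * h22 = 0) (e6 : h12 * h33 - h13 * h23 = 0) :
    h12 = 0 ∧ h13 = 0 := by
  have h12R : h12 * R2323 = 0 := by linear_combination h22 * e6 - h23 * e5 - h12 * e3
  have h13R : h13 * R2323 = 0 := by linear_combination h23 * e6 - h33 * e5 - h13 * e3
  exact ⟨(mul_eq_zero.mp h12R).resolve_right hR, (mul_eq_zero.mp h13R).resolve_right hR⟩

theorem gauss_solution_eq_of_det_ne_zero (hR : R2323 ≠ 0)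
    (e1 : h11 * h22 - h12 ^ 2 = R1212) (e2 : h11 * h33 - h13 ^ 2 = R1313)
    (e3 : h22 * h33 - h23 ^ 2 = R2323) (e4 : h11 * h23 - h13 * h12 = R1213)
    (e5 : h12 * h23 - h13 * h22 = 0) (e6 : h12 * h33 - h13 * h23 = 0) :
    h12 = 0 ∧ h13 = 0 ∧ h11 ^ 2 = (R1212 * R1313 - R1213 ^ 2) / R2323 ∧
      h11 * h22 = R1212 ∧ h11 * h33 = R1313 ∧ h11 * h23 = R1213 := by
  obtain ⟨rfl, rfl⟩ := eq_zero_of_gauss_of_det_ne_zero hR e3 e5 e6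
  refine ⟨rfl, rfl, ?_, by linear_combination e1, by linear_combination e2,
    by linear_combination e4⟩
  rw [eq_div_iff hR]
  linear_combination -h11 ^ 2 * e3 + h11 * h33 * e1 + R1212 * e2 - (h11 * h23 + R1213) * e4

end Field

theorem gaussSolvable_of_sq_mul_eq {R1212 R1313 R2323 R1213 s : ℝ} (hs : s ≠ 0)
    (hsq : s ^ 2 * R2323 = R1212 * R1313 - R1213 ^ 2) :
    GaussSolvable R1212 R1313 R2323 R1213 0 0 := by
  refine ⟨s, 0, 0, R1212 / s, R1213 / s, R1313 / s, ?_, ?_, ?_, ?_, by ring, by ring⟩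
  · field_simp; ring
  · field_simp; ring
  · field_simp; linear_combination -hsq
  · field_simp; ring

/-- Lemma 4.1 (1): solvability of the Gauss equation in codimension 1 when
`R1223 = R1323 = 0`, `R1212 ≠ 0`, `R2323 ≠ 0`, and uniqueness of the solution up to
sign. -/
theorem gauss_equation_solvable_iff_S_pos
    (R1212 R1313 R2323 R1213 R1223 R1323 : ℝ)
    (h0 : R1223 = 0) (h0' : R1323 = 0)
    (hne : R1212 ≠ 0) (hne' : R2323 ≠ 0) :
    (GaussSolvable R1212 R1313 R2323 R1213 R1223 R1323 ↔
      (R1212 * R1313 - R1213 ^ 2) / R2323 > 0) ∧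
    (∀ h11 h12 h13 h22 h23 h33 : ℝ,
      h11 * h22 - h12 ^ 2 = R1212 →
      h11 * h33 - h13 ^ 2 = R1313 →
      h22 * h33 - h23 ^ 2 = R2323 →
      h11 * h23 - h13 * h12 = R1213 →
      h12 * h23 - h13 * h22 = R1223 →
      h12 * h33 - h13 * h23 = R1323 →
      h12 = 0 ∧ h13 = 0 ∧
      h11 ^ 2 = (R1212 * R1313 - R1213 ^ 2) / R2323 ∧
      h11 * h22 = R1212 ∧ h11 * h33 = R1313 ∧ h11 * h23 = R1213) := by
  subst h0 h0'
  refine ⟨⟨?_, fun hS => ?_⟩, fun _ _ _ _ _ _ => gauss_solution_eq_of_det_ne_zero hne'⟩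
  · rintro ⟨h11, h12, h13, h22, h23, h33, e1, e2, e3, e4, e5, e6⟩
    obtain ⟨-, -, hsq, h1122, -⟩ := gauss_solution_eq_of_det_ne_zero hne' e1 e2 e3 e4 e5 e6
    have h11_ne : h11 ≠ 0 := left_ne_zero_of_mul (h1122 ▸ hne)
    rw [← hsq]
    positivity
  · refine gaussSolvable_of_sq_mul_eq (Real.sqrt_pos.mpr hS).ne' ?_
    rw [Real.sq_sqrt hS.le, div_mul_cancel₀ _ hne']
end

section
/- Let R_{1212}, R_{1313}, R_{2323}, R_{1213}, R_{1223}, R_{1323} ∈ ℝ with R_{1223} = R_{1323} = 0, R_{2323} = 0 and R_{1212} ≠ 0. Then a solution of the Gauss equation in codimension 1 exists if and only if R_{1212}·R_{1313} = R_{1213}². -/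
/-- Lemma 4.1 (2): solvability of the Gauss equation in codimension 1 when
`R1223 = R1323 = R2323 = 0` and `R1212 ≠ 0`. -/
theorem gauss_equation_solvable_iff_degenerate
    (R1212 R1313 R2323 R1213 R1223 R1323 : ℝ)
    (h0 : R1223 = 0) (h0' : R1323 = 0)
    (h0'' : R2323 = 0) (hne : R1212 ≠ 0) :
    GaussSolvable R1212 R1313 R2323 R1213 R1223 R1323 ↔
      R1212 * R1313 = R1213 ^ 2 := by
  subst h0 h0' h0''
  constructor
  · rintro ⟨h11, h12, h13, h22, h23, h33, e1, e2, e3, e4, e5, e6⟩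
    linear_combination (-R1313) * e1 - (h11 * h22 - h12 ^ 2) * e2 + R1213 * e4 +
      (h11 * h23 - h13 * h12) * e4 + h11 ^ 2 * e3 - h11 * h12 * e6 + h11 * h13 * e5
  · intro h
    exact ⟨1, 0, 0, R1212, R1213, R1313, by ring, by ring, by linarith [h], by ring, by ring, by ring⟩
end

section
/- There is no solution of the Gauss equation in codimension 1 with curvature components R_{1212} = −3/4, R_{1313} = 1/4, R_{2323} = 1/4, R_{1213} = R_{1223} = R_{1323} = 0. (These are the curvature components of the 3-dimensional Heisenberg Lie algebra h₃ with its inner product making the standard basis orthonormal.) -/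
/-- Proposition 4.3: the Heisenberg Lie algebra `h₃` with its standard inner product
has no solution of the Gauss equation in codimension 1. -/
theorem heisenberg_no_gauss_solution :
    ¬ GaussSolvable (-3/4) (1/4) (1/4) 0 0 0 := by
  rintro ⟨a, b, c, d, e, f, h1, h2, h3, h4, h5, h6⟩
  -- Cofactor expansions of the determinant along the three rows must agree.
  have e2 : a/4 = -3*f/4 := by
    linear_combination -a*h3 + b*h6 - c*h5 + c*h5 - e*h4 + f*h1
  nlinarith [sq_nonneg c, sq_nonneg f, sq_nonneg (a+3*f), sq_nonneg (a-f)]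
end

section
/- Let λ > 0. The Gauss equation in codimension 1 with curvature components R_{1212} = −(3λ² + 1), R_{1313} = λ² − 1, R_{2323} = λ² − 1, R_{1213} = −2λ, R_{1223} = R_{1323} = 0 (these are the curvature components of the solvable Lie algebra r₃ with its Milnor-type orthonormal frame with parameter λ) has a solution if and only if 1/√3 < λ < 1. -/
/-!
The six Gauss equations say precisely that the adjugate of the symmetric matrix `h` is a
prescribed symmetric matrix `A`. For `3 × 3` matrices `det (adj h) = (det h)²` and
`adj (adj h) = det h • h`, so a solution forces `det A ≥ 0`, and `det A = 0` would force
`adj A = 0`; conversely, if `det A > 0` then `h = adj A / √(det A)` is a solution.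
For `r₃` one finds `det A = (1 - λ²)(3λ² - 1)(λ² + 1)` while `adj A` never vanishes.
-/

open Matrix

/-- The Gauss equations read `adjugate h = gaussMatrix R`: the curvature components are,
up to sign, the `2 × 2` minors of `h`. -/
def gaussMatrix (R1212 R1313 R2323 R1213 R1223 R1323 : ℝ) : Matrix (Fin 3) (Fin 3) ℝ :=
  !![R2323, -R1323, R1223; -R1323, R1313, -R1213; R1223, -R1213, R1212]

theorem isSymm_gaussMatrix (R1212 R1313 R2323 R1213 R1223 R1323 : ℝ) :
    (gaussMatrix R1212 R1313 R2323 R1213 R1223 R1323).IsSymm := by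
  ext i j
  fin_cases i <;> fin_cases j <;> rfl

theorem gaussSolvable_iff_exists_isSymm_adjugate_eq
    (R1212 R1313 R2323 R1213 R1223 R1323 : ℝ) :
    GaussSolvable R1212 R1313 R2323 R1213 R1223 R1323 ↔
      ∃ h : Matrix (Fin 3) (Fin 3) ℝ, h.IsSymm ∧
        h.adjugate = gaussMatrix R1212 R1313 R2323 R1213 R1223 R1323 := by
  constructor
  · rintro ⟨h11, h12, h13, h22, h23, h33, e1, e2, e3, e4, e5, e6⟩
    refine ⟨!![h11, h12, h13; h12, h22, h23; h13, h23, h33], ?_, ?_⟩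
    · ext i j
      fin_cases i <;> fin_cases j <;> rfl
    · rw [adjugate_fin_three_of]
      ext i j
      fin_cases i <;> fin_cases j <;> simp [gaussMatrix] <;> linarith
  · rintro ⟨h, hS, hA⟩
    rw [adjugate_fin_three, hS.apply 0 1, hS.apply 0 2, hS.apply 1 2, gaussMatrix,
      ← Matrix.ext_iff] at hA
    simp [Fin.forall_fin_succ] at hA
    refine ⟨h 0 0, h 0 1, h 0 2, h 1 1, h 1 2, h 2 2, ?_, ?_, ?_, ?_, ?_, ?_⟩ <;> linarith

section AdjugateFinThree

variable {K : Type*} [CommRing K]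

theorem adjugate_adjugate_fin_three (h : Matrix (Fin 3) (Fin 3) K) :
    h.adjugate.adjugate = h.det • h := by
  simpa using adjugate_adjugate' h

theorem det_pos_of_adjugate_eq [LinearOrder K] [IsStrictOrderedRing K]
    {h A : Matrix (Fin 3) (Fin 3) K} (hA : h.adjugate = A) (hA' : A.adjugate ≠ 0) :
    0 < A.det := by
  have hdet : A.det = h.det ^ 2 := by simpa [← hA] using det_adjugate h
  have hh : h.det ≠ 0 := by
    rintro h0
    apply hA'
    rw [← hA, adjugate_adjugate_fin_three, h0, zero_smul]
  rw [hdet]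
  positivity

end AdjugateFinThree

theorem exists_isSymm_adjugate_eq_of_det_pos {A : Matrix (Fin 3) (Fin 3) ℝ} (hS : A.IsSymm)
    (hA : 0 < A.det) : ∃ h : Matrix (Fin 3) (Fin 3) ℝ, h.IsSymm ∧ h.adjugate = A := by
  refine ⟨(√A.det)⁻¹ • A.adjugate, hS.adjugate.smul _, ?_⟩
  rw [adjugate_smul, adjugate_adjugate_fin_three, smul_smul]
  simp [inv_pow, Real.sq_sqrt hA.le, hA.ne']

theorem exists_isSymm_adjugate_eq_iff_det_pos {A : Matrix (Fin 3) (Fin 3) ℝ} (hS : A.IsSymm)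
    (hA' : A.adjugate ≠ 0) :
    (∃ h : Matrix (Fin 3) (Fin 3) ℝ, h.IsSymm ∧ h.adjugate = A) ↔ 0 < A.det :=
  ⟨fun ⟨_, _, hA⟩ ↦ det_pos_of_adjugate_eq hA hA', exists_isSymm_adjugate_eq_of_det_pos hS⟩

theorem det_gaussMatrix_r3 (l : ℝ) :
    (gaussMatrix (-(3 * l ^ 2 + 1)) (l ^ 2 - 1) (l ^ 2 - 1) (-2 * l) 0 0).det =
      (1 - l ^ 2) * (3 * l ^ 2 - 1) * (l ^ 2 + 1) := by
  simp [gaussMatrix, det_fin_three]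
  ring

theorem adjugate_gaussMatrix_r3_ne_zero (l : ℝ) :
    (gaussMatrix (-(3 * l ^ 2 + 1)) (l ^ 2 - 1) (l ^ 2 - 1) (-2 * l) 0 0).adjugate ≠ 0 := by
  intro h0
  have e00 := congrFun₂ h0 0 0
  have e11 := congrFun₂ h0 1 1
  simp [adjugate_fin_three, gaussMatrix] at e00 e11
  rcases e11 with h | h <;> nlinarith

theorem one_div_sqrt_lt_iff {a l : ℝ} (ha : 0 < a) (hl : 0 < l) :
    1 / √a < l ↔ 1 < a * l ^ 2 := by
  rw [one_div, ← Real.sqrt_inv, Real.sqrt_lt' hl, inv_lt_iff_one_lt_mul₀' ha]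

/-- Proposition 4.5: the metric Lie algebra `(r₃, ⟨·,·⟩_λ)` has a solution of the
Gauss equation in codimension 1 if and only if `1/√3 < λ < 1`. -/
theorem r3_gauss_solvable_iff (l : ℝ) (hl : l > 0) :
    GaussSolvable (-(3 * l ^ 2 + 1)) (l ^ 2 - 1) (l ^ 2 - 1) (-2 * l) 0 0 ↔
      1 / Real.sqrt 3 < l ∧ l < 1 := by
  rw [gaussSolvable_iff_exists_isSymm_adjugate_eq,
    exists_isSymm_adjugate_eq_iff_det_pos (isSymm_gaussMatrix ..)
      (adjugate_gaussMatrix_r3_ne_zero l),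
    det_gaussMatrix_r3, mul_pos_iff_of_pos_right (by positivity), mul_pos_iff,
    one_div_sqrt_lt_iff three_pos hl]
  constructor
  · rintro (⟨h1, h3⟩ | ⟨h1, h3⟩)
    · exact ⟨by linarith, by nlinarith⟩
    · nlinarith
  · rintro ⟨h3, h1⟩
    left
    constructor <;> nlinarith
end

section
/- Let λ ∈ ℝ. The Gauss equation in codimension 1 with curvature components R_{1212} = −1 − 3λ², R_{1313} = λ², R_{2323} = λ², R_{1213} = 0, R_{1223} = R_{1323} = 0 (these are the curvature components of the solvable Lie algebra r_{3,0} with its Milnor-type orthonormal frame with parameter λ) has a solution if and only if λ = 0. -/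
/-- Proposition 4.6 (1): the metric Lie algebra `(r_{3,0}, ⟨·,·⟩_λ)` has a solution
of the Gauss equation in codimension 1 if and only if `λ = 0`. -/
theorem r3_zero_gauss_solvable_iff (l : ℝ) :
    GaussSolvable (-1 - 3 * l ^ 2) (l ^ 2) (l ^ 2) 0 0 0 ↔ l = 0 := by
  constructor
  · rintro ⟨h11, h12, h13, h22, h23, h33, e1, e2, e3, e4, e5, e6⟩
    by_contra hl
    have hl2 : 0 < l ^ 2 := by positivity
    set d := h11 * (h22 * h33 - h23 ^ 2) - h12 * (h12 * h33 - h13 * h23)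
        + h13 * (h12 * h23 - h13 * h22) with hd
    have hd1 : d = h11 * l ^ 2 := by
      rw [hd]; linear_combination h11 * e3 - h12 * e6 + h13 * e5
    have hd3 : d = h33 * (-1 - 3 * l ^ 2) := by
      rw [hd]; linear_combination h13 * e5 - h23 * e4 + h33 * e1
    have h1133 : 0 < h11 * h33 := by nlinarith [sq_nonneg h13]
    have key : d ^ 2 = h11 * h33 * (l ^ 2 * (-1 - 3 * l ^ 2)) := by
      rw [pow_two]; nth_rewrite 1 [hd1]; rw [hd3]; ring
    nlinarith [sq_nonneg d, mul_pos h1133 hl2, mul_pos (mul_pos h1133 hl2) hl2]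
  · rintro rfl
    exact ⟨1, 0, 0, -1, 0, 0, by norm_num⟩
end

section
/- Let α ∈ ℝ with −1 ≤ α < 0 and λ ∈ ℝ. The Gauss equation in codimension 1 with curvature components R_{1212} = −1 − 3λ²(α−1)², R_{1313} = −α² + λ²(α−1)², R_{2323} = −α + λ²(α−1)², R_{1213} = −2λα(α−1), R_{1223} = R_{1323} = 0 (these are the curvature components of the solvable Lie algebra r_{3,α} with its Milnor-type orthonormal frame with parameter λ) has a solution if and only if |λ| < √(√((1+α²)² + 12α²) − (1+α²)) / (√6·(1−α)). -/
set_option maxHeartbeats 1000000 in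
/-- Proposition 4.6 (2): for `-1 ≤ α < 0`, the metric Lie algebra
`(r_{3,α}, ⟨·,·⟩_λ)` has a solution of the Gauss equation in codimension 1 if and
only if `|λ| < √(√((1+α²)² + 12α²) − (1+α²)) / (√6 (1−α))`. -/
theorem r3_alpha_neg_gauss_solvable_iff (a l : ℝ) (ha : -1 ≤ a) (ha' : a < 0) :
    GaussSolvable (-1 - 3 * l ^ 2 * (a - 1) ^ 2) (-a ^ 2 + l ^ 2 * (a - 1) ^ 2)
        (-a + l ^ 2 * (a - 1) ^ 2) (-2 * l * a * (a - 1)) 0 0 ↔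
      |l| < Real.sqrt (Real.sqrt ((1 + a ^ 2) ^ 2 + 12 * a ^ 2) - (1 + a ^ 2)) /
        (Real.sqrt 6 * (1 - a)) := by
  set X := Real.sqrt ((1 + a ^ 2) ^ 2 + 12 * a ^ 2) with hXdef
  have hX2 : X ^ 2 = (1 + a ^ 2) ^ 2 + 12 * a ^ 2 := Real.sq_sqrt (by positivity)
  have hXnn : 0 ≤ X := Real.sqrt_nonneg _
  have ha2 : 0 < a ^ 2 := by nlinarith [mul_pos_of_neg_of_neg ha' ha']
  have hc : (0:ℝ) < 1 + a ^ 2 := by positivity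
  have hXc : (1 + a ^ 2) < X := by nlinarith [hX2, hXnn, ha2, hc]
  have h1a : 0 < 1 - a := by linarith
  have h6 : Real.sqrt 6 * (1 - a) = Real.sqrt (6 * (1 - a) ^ 2) := by
    rw [Real.sqrt_mul (by norm_num : (0:ℝ) ≤ 6), Real.sqrt_sq h1a.le]
  have hrhs : (|l| < Real.sqrt (X - (1 + a ^ 2)) / (Real.sqrt 6 * (1 - a))) ↔
      6 * l ^ 2 * (1 - a) ^ 2 < X - (1 + a ^ 2) := by
    rw [h6, ← Real.sqrt_div (by linarith : (0:ℝ) ≤ X - (1 + a ^ 2)),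
      Real.lt_sqrt (abs_nonneg l), sq_abs, lt_div_iff₀ (by positivity)]
    constructor <;> intro h <;> nlinarith [h]
  rw [hrhs]
  constructor
  · rintro ⟨h11, h12, h13, h22, h23, h33, e1, e2, e3, e4, e5, e6⟩
    have hp : 0 < -a + l ^ 2 * (a - 1) ^ 2 := by nlinarith [sq_nonneg (l * (a - 1))]
    have hs : -1 - 3 * l ^ 2 * (a - 1) ^ 2 < 0 := by nlinarith [sq_nonneg (l * (a - 1))]
    have hW2 : (h11 * h23 - h13 * h12) ^ 2 = 4 * (l ^ 2 * (a - 1) ^ 2) * a ^ 2 := by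
      rw [e4]; ring
    have key : (-a + l ^ 2 * (a - 1) ^ 2) *
        ((-a ^ 2 + l ^ 2 * (a - 1) ^ 2) * (-1 - 3 * l ^ 2 * (a - 1) ^ 2)
          - 4 * (l ^ 2 * (a - 1) ^ 2) * a ^ 2) =
        (h11 * h22 * h33 - h11 * h23 ^ 2 - h12 ^ 2 * h33 + 2 * h12 * h13 * h23
          - h13 ^ 2 * h22) ^ 2 := by
      rw [← e1, ← e2, ← e3, ← hW2]
      linear_combination
        ((h12 * h33 - h13 * h23) * (h11 * h22 - h12 ^ 2)
            - (h11 * h23 - h13 * h12) * (h12 * h23 - h13 * h22)) * e6 +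
          ((h11 * h33 - h13 ^ 2) * (h12 * h23 - h13 * h22)
            - (h12 * h33 - h13 * h23) * (h11 * h23 - h13 * h12)) * e5
    have key2 : (-a + l ^ 2 * (a - 1) ^ 2) * (-1 - 3 * l ^ 2 * (a - 1) ^ 2) =
        (h11 * h22 * h33 - h11 * h23 ^ 2 - h12 ^ 2 * h33 + 2 * h12 * h13 * h23
          - h13 ^ 2 * h22) * h22 := by
      rw [← e1, ← e3]
      linear_combination (h12 * h23 - h13 * h22) * e5
    have hD4 : 0 < (-a ^ 2 + l ^ 2 * (a - 1) ^ 2) * (-1 - 3 * l ^ 2 * (a - 1) ^ 2)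
        - 4 * (l ^ 2 * (a - 1) ^ 2) * a ^ 2 := by
      by_contra hD
      push_neg at hD
      have hdh2 : (h11 * h22 * h33 - h11 * h23 ^ 2 - h12 ^ 2 * h33 + 2 * h12 * h13 * h23
          - h13 ^ 2 * h22) ^ 2 = 0 := by
        have h1 := mul_nonpos_of_nonneg_of_nonpos hp.le hD
        linarith [key, h1, sq_nonneg (h11 * h22 * h33 - h11 * h23 ^ 2 - h12 ^ 2 * h33
          + 2 * h12 * h13 * h23 - h13 ^ 2 * h22)]
      have hdh0 : h11 * h22 * h33 - h11 * h23 ^ 2 - h12 ^ 2 * h33 + 2 * h12 * h13 * h23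
          - h13 ^ 2 * h22 = 0 := by
        exact pow_eq_zero_iff (by norm_num) |>.mp hdh2
      rw [hdh0, zero_mul] at key2
      nlinarith [mul_neg_of_pos_of_neg hp hs]
    have hB : (0:ℝ) ≤ (1 + a ^ 2) + 6 * (l ^ 2 * (a - 1) ^ 2) := by positivity
    have hsq : ((1 + a ^ 2) + 6 * (l ^ 2 * (a - 1) ^ 2)) ^ 2 < X ^ 2 := by
      nlinarith [hD4]
    nlinarith [hsq, hXnn, hB]
  · intro hl
    have hp : 0 < -a + l ^ 2 * (a - 1) ^ 2 := by nlinarith [sq_nonneg (l * (a - 1))]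
    have hD4 : 0 < (-a ^ 2 + l ^ 2 * (a - 1) ^ 2) * (-1 - 3 * l ^ 2 * (a - 1) ^ 2)
        - 4 * (l ^ 2 * (a - 1) ^ 2) * a ^ 2 := by
      have hB : (0:ℝ) ≤ (1 + a ^ 2) + 6 * (l ^ 2 * (a - 1) ^ 2) := by positivity
      have hBX : (1 + a ^ 2) + 6 * (l ^ 2 * (a - 1) ^ 2) < X := by nlinarith [hl]
      have hsq : ((1 + a ^ 2) + 6 * (l ^ 2 * (a - 1) ^ 2)) ^ 2 < X ^ 2 := by
        nlinarith [hBX, hB, hXnn]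
      nlinarith [hsq]
    set D := (-a ^ 2 + l ^ 2 * (a - 1) ^ 2) * (-1 - 3 * l ^ 2 * (a - 1) ^ 2)
        - 4 * (l ^ 2 * (a - 1) ^ 2) * a ^ 2 with hDdef
    set p := -a + l ^ 2 * (a - 1) ^ 2 with hpdef
    set d := Real.sqrt (p * D) with hddef
    have hd2 : d ^ 2 = p * D := Real.sq_sqrt (mul_pos hp hD4).le
    have hdpos : 0 < d := Real.sqrt_pos.mpr (mul_pos hp hD4)
    have hd0 : d ≠ 0 := ne_of_gt hdpos
    have hpD : p * D ≠ 0 := (mul_pos hp hD4).ne'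
    refine ⟨D / d, 0, 0, p * (-1 - 3 * l ^ 2 * (a - 1) ^ 2) / d,
      -(p * (2 * l * a * (a - 1))) / d, p * (-a ^ 2 + l ^ 2 * (a - 1) ^ 2) / d,
      ?_, ?_, ?_, ?_, by ring, by ring⟩
    · calc D / d * (p * (-1 - 3 * l ^ 2 * (a - 1) ^ 2) / d) - 0 ^ 2
          = p * D * (-1 - 3 * l ^ 2 * (a - 1) ^ 2) / d ^ 2 := by ring
        _ = -1 - 3 * l ^ 2 * (a - 1) ^ 2 := by rw [hd2]; exact mul_div_cancel_left₀ _ hpD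
    · calc D / d * (p * (-a ^ 2 + l ^ 2 * (a - 1) ^ 2) / d) - 0 ^ 2
          = p * D * (-a ^ 2 + l ^ 2 * (a - 1) ^ 2) / d ^ 2 := by ring
        _ = -a ^ 2 + l ^ 2 * (a - 1) ^ 2 := by rw [hd2]; exact mul_div_cancel_left₀ _ hpD
    · calc p * (-1 - 3 * l ^ 2 * (a - 1) ^ 2) / d * (p * (-a ^ 2 + l ^ 2 * (a - 1) ^ 2) / d)
            - (-(p * (2 * l * a * (a - 1))) / d) ^ 2
          = p * D * p / d ^ 2 := by rw [hDdef]; ring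
        _ = p := by rw [hd2]; exact mul_div_cancel_left₀ _ hpD
    · calc D / d * (-(p * (2 * l * a * (a - 1))) / d) - 0 * 0
          = p * D * (-2 * l * a * (a - 1)) / d ^ 2 := by ring
        _ = -2 * l * a * (a - 1) := by rw [hd2]; exact mul_div_cancel_left₀ _ hpD
end

section
/- Let λ ∈ ℝ with λ ≥ 1. The Gauss equation in codimension 1 with curvature components R_{1212} = −(1/4)(λ − 1/λ)(3λ + 1/λ), R_{1313} = (1/4)(λ − 1/λ)(λ + 3/λ), R_{2323} = (1/4)(λ − 1/λ)², R_{1213} = 0, R_{1223} = R_{1323} = 0 (these are the curvature components of the solvable Lie algebra r'_{3,0} with its Milnor-type orthonormal frame with parameter λ) has a solution if and only if λ = 1. -/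
/-- Proposition 4.7 (1): for `λ ≥ 1`, the metric Lie algebra `(r'_{3,0}, ⟨·,·⟩_λ)`
has a solution of the Gauss equation in codimension 1 if and only if `λ = 1`. -/
theorem r3_prime_zero_gauss_solvable_iff (l : ℝ) (hl : 1 ≤ l) :
    GaussSolvable (-(1/4) * (l - 1/l) * (3*l + 1/l)) ((1/4) * (l - 1/l) * (l + 3/l))
        ((1/4) * (l - 1/l) ^ 2) 0 0 0 ↔ l = 1 := by
  constructor
  · rintro ⟨h11, h12, h13, h22, h23, h33, e1, e2, e3, e4, e5, e6⟩
    by_contra hne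
    have hl1 : 1 < l := lt_of_le_of_ne hl (Ne.symm hne)
    have hlpos : 0 < l := by linarith
    have hinv : 1/l < 1 := by
      rw [div_lt_one hlpos]; linarith
    have hinvpos : 0 < 1/l := by positivity
    have hp : 0 < (1/4) * (l - 1/l) * (3*l + 1/l) := by nlinarith
    have hq : 0 < (1/4) * (l - 1/l) * (l + 3/l) := by
      have : 0 < 3/l := by positivity
      nlinarith
    have hr : 0 < (1/4) * (l - 1/l) ^ 2 := by nlinarith
    set d : ℝ := h11 * (h22 * h33 - h23 ^ 2) - h12 * (h12 * h33 - h13 * h23)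
        + h13 * (h12 * h23 - h13 * h22) with hd
    have key : (h11 * h22 - h12 ^ 2) * (h11 * h33 - h13 ^ 2) * (h22 * h33 - h23 ^ 2)
        = d ^ 2 := by
      rw [hd]
      linear_combination ((h22 * h33 - h23 ^ 2) * (h11 * h23 - h13 * h12)) * e4
        + ((h11 * h33 - h13 ^ 2) * (h12 * h23 - h13 * h22)) * e5
        + ((h11 * h22 - h12 ^ 2) * (h12 * h33 - h13 * h23)
            - 2 * (h11 * h23 - h13 * h12) * (h12 * h23 - h13 * h22)) * e6
    rw [e1, e2, e3] at key
    nlinarith [sq_nonneg d, mul_pos hq hr]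
  · rintro rfl
    refine ⟨0, 0, 0, 0, 0, 0, by norm_num, by norm_num, by norm_num,
      by norm_num, by norm_num, by norm_num⟩
end

section
/- Let α > 0 and λ ∈ ℝ with λ ≥ 1. The Gauss equation in codimension 1 with curvature components R_{1212} = −α² − (1/4)(λ − 1/λ)(3λ + 1/λ), R_{1313} = −α² + (1/4)(λ − 1/λ)(λ + 3/λ), R_{2323} = −α² + (1/4)(λ − 1/λ)², R_{1213} = α(λ − 1/λ), R_{1223} = R_{1323} = 0 (these are the curvature components of the solvable Lie algebra r'_{3,α} with its Milnor-type orthonormal frame with parameter λ) has a solution if and only if √((1 + 2α² + 2√(1 + α² + α⁴))/3) < λ < α + √(1 + α²). -/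
open Real Set

theorem gaussSolvable_of_pos {R₁ R₂ R₃ R₄ : ℝ} (h : 0 < R₃ * (R₁ * R₂ - R₄ ^ 2)) :
    GaussSolvable R₁ R₂ R₃ R₄ 0 0 := by
  set t := √(R₃ * (R₁ * R₂ - R₄ ^ 2))
  have ht : t ≠ 0 := (sqrt_pos.2 h).ne'
  have ht2 : t ^ 2 = R₃ * (R₁ * R₂ - R₄ ^ 2) := sq_sqrt h.le
  refine ⟨(R₁ * R₂ - R₄ ^ 2) / t, 0, 0, R₃ * R₁ / t, R₃ * R₄ / t, R₃ * R₂ / t,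
    ?_, ?_, ?_, ?_, by ring, by ring⟩ <;> field_simp <;> rw [ht2] <;> ring

theorem GaussSolvable.pos_or_degenerate {R₁ R₂ R₃ R₄ : ℝ} (h : GaussSolvable R₁ R₂ R₃ R₄ 0 0) :
    0 < R₃ * (R₁ * R₂ - R₄ ^ 2) ∨ R₁ * R₂ - R₄ ^ 2 = 0 ∧ R₃ * R₄ = 0 := by
  obtain ⟨h₁₁, h₁₂, h₁₃, h₂₂, h₂₃, h₃₃, rfl, rfl, rfl, rfl, h₁₂₂₃, h₁₃₂₃⟩ := h
  set d := h₁₁ * h₂₂ * h₃₃ + 2 * h₁₂ * h₁₃ * h₂₃ - h₁₁ * h₂₃ ^ 2 - h₂₂ * h₁₃ ^ 2 - h₃₃ * h₁₂ ^ 2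
  rcases eq_or_ne d 0 with hd | hd
  · right
    constructor
    · linear_combination h₁₁ * hd
    · linear_combination h₂₃ * hd + (h₁₂ * h₃₃ - h₁₃ * h₂₃) * h₁₂₂₃
  · left
    have det_adjugate : (h₂₂ * h₃₃ - h₂₃ ^ 2) *
        ((h₁₁ * h₂₂ - h₁₂ ^ 2) * (h₁₁ * h₃₃ - h₁₃ ^ 2) - (h₁₁ * h₂₃ - h₁₃ * h₁₂) ^ 2) = d ^ 2 := by
      linear_combination ((h₁₁ * h₃₃ - h₁₃ ^ 2) * (h₁₂ * h₂₃ - h₁₃ * h₂₂)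
          - (h₁₁ * h₂₃ - h₁₃ * h₁₂) * (h₁₂ * h₃₃ - h₁₃ * h₂₃)) * h₁₂₂₃
        + ((h₁₁ * h₂₂ - h₁₂ ^ 2) * (h₁₂ * h₃₃ - h₁₃ * h₂₃)
          - (h₁₁ * h₂₃ - h₁₃ * h₁₂) * (h₁₂ * h₂₃ - h₁₃ * h₂₂)) * h₁₃₂₃
    rw [det_adjugate]
    positivity

theorem mul_pos_iff_of_strictMonoOn_of_strictAntiOn {α β : Type*} [LinearOrder α] [Ring β]
    [LinearOrder β] [IsStrictOrderedRing β] {f g : α → β} {s : Set α} {x₀ x₁ x : α}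
    (hf : StrictMonoOn f s) (hg : StrictAntiOn g s) (hx₀ : x₀ ∈ s) (hx₁ : x₁ ∈ s) (hx : x ∈ s)
    (hfx₁ : f x₁ = 0) (hgx₀ : g x₀ = 0) (h₀₁ : x₀ < x₁) :
    0 < f x * g x ↔ x₀ < x ∧ x < x₁ := by
  have hf_pos : 0 < f x ↔ x₁ < x := hfx₁ ▸ hf.lt_iff_lt hx₁ hx
  have hf_neg : f x < 0 ↔ x < x₁ := hfx₁ ▸ hf.lt_iff_lt hx hx₁
  have hg_pos : 0 < g x ↔ x < x₀ := hgx₀ ▸ hg.lt_iff_gt hx₀ hx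
  have hg_neg : g x < 0 ↔ x₀ < x := hgx₀ ▸ hg.lt_iff_gt hx hx₀
  rw [mul_pos_iff, hf_pos, hf_neg, hg_pos, hg_neg]
  constructor
  · rintro (⟨h₁, h₀⟩ | ⟨h₁, h₀⟩)
    · exact absurd (h₀.trans (h₀₁.trans h₁)) (lt_irrefl x)
    · exact ⟨h₀, h₁⟩
  · rintro ⟨h₀, h₁⟩
    exact Or.inr ⟨h₁, h₀⟩

theorem strictMonoOn_sinh_log_sq : StrictMonoOn (fun l ↦ sinh (log l) ^ 2) (Ici 1) :=
  fun _ hx _ _ hxy ↦ pow_lt_pow_left₀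
    (sinh_lt_sinh.2 (log_lt_log (one_pos.trans_le hx) hxy)) (sinh_nonneg_iff.2 (log_nonneg hx))
    two_ne_zero

theorem sinh_log_sqrt_sq {a q : ℝ} (hq : q ^ 2 = 1 + a ^ 2 + a ^ 4) (hq₀ : 0 ≤ q) :
    sinh (log √((1 + 2 * a ^ 2 + 2 * q) / 3)) ^ 2 = (2 * q - a ^ 2 - 2) / 3 := by
  have hc : 0 < (1 + 2 * a ^ 2 + 2 * q) / 3 := by positivity
  rw [sinh_log (sqrt_pos.2 hc)]
  field_simp
  rw [sq_sqrt hc.le]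
  linear_combination (-4) * hq

def r3PrimeMinor (a u : ℝ) : ℝ := a ^ 4 - (2 * a ^ 2 + 4) * u - 3 * u ^ 2

theorem r3PrimeMinor_strictAntiOn (a : ℝ) : StrictAntiOn (r3PrimeMinor a) (Ici 0) := by
  intro u hu v _ huv
  simp only [r3PrimeMinor]
  nlinarith [mem_Ici.1 hu]

theorem r3PrimeMinor_eq_zero {a q : ℝ} (hq : q ^ 2 = 1 + a ^ 2 + a ^ 4) :
    r3PrimeMinor a ((2 * q - a ^ 2 - 2) / 3) = 0 := by
  unfold r3PrimeMinor
  linear_combination (-4 / 3) * hq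

theorem r3PrimeMinor_sq_neg {a : ℝ} (ha : a ≠ 0) : r3PrimeMinor a (a ^ 2) < 0 := by
  unfold r3PrimeMinor
  nlinarith [pow_pos (sq_pos_of_ne_zero ha) 2, sq_pos_of_ne_zero ha]

theorem r3Prime_curvature_minor_eq {a l : ℝ} (hl : 0 < l) :
    (-a ^ 2 - 1 / 4 * (l - 1 / l) * (3 * l + 1 / l)) * (-a ^ 2 + 1 / 4 * (l - 1 / l) * (l + 3 / l))
      - (a * (l - 1 / l)) ^ 2 = r3PrimeMinor a (sinh (log l) ^ 2) := by
  rw [r3PrimeMinor, sinh_log hl]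
  field_simp
  ring

theorem r3Prime_curvature_pos_iff {a l : ℝ} (ha : 0 < a) (hl : 1 ≤ l) :
    0 < (sinh (log l) ^ 2 - a ^ 2) * r3PrimeMinor a (sinh (log l) ^ 2) ↔
      √((1 + 2 * a ^ 2 + 2 * √(1 + a ^ 2 + a ^ 4)) / 3) < l ∧ l < a + √(1 + a ^ 2) := by
  set q := √(1 + a ^ 2 + a ^ 4)
  have hq : q ^ 2 = 1 + a ^ 2 + a ^ 4 := sq_sqrt (by positivity)
  have hq₁ : 1 ≤ q := one_le_sqrt.2 (by nlinarith [sq_nonneg a, sq_nonneg (a ^ 2)])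
  set L := √((1 + 2 * a ^ 2 + 2 * q) / 3)
  set f : ℝ → ℝ := fun l ↦ sinh (log l) ^ 2 - a ^ 2
  set g : ℝ → ℝ := fun l ↦ r3PrimeMinor a (sinh (log l) ^ 2)
  have hf : StrictMonoOn f (Ici 1) := fun x hx y hy hxy ↦
    sub_lt_sub_right (strictMonoOn_sinh_log_sq hx hy hxy) _
  have hg : StrictAntiOn g (Ici 1) :=
    (r3PrimeMinor_strictAntiOn a).comp_strictMonoOn strictMonoOn_sinh_log_sq
      fun _ _ ↦ mem_Ici.2 (sq_nonneg _)
  have hL : L ∈ Ici 1 := one_le_sqrt.2 (by nlinarith [sq_nonneg a])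
  have hs : a + √(1 + a ^ 2) ∈ Ici 1 := by
    have : 1 ≤ √(1 + a ^ 2) := one_le_sqrt.2 (by nlinarith [sq_nonneg a])
    exact mem_Ici.2 (by linarith)
  have hsinh : sinh (log (a + √(1 + a ^ 2))) = a := sinh_arsinh a
  have hfs : f (a + √(1 + a ^ 2)) = 0 := by simp only [f, hsinh, sub_self]
  have hgL : g L = 0 := by
    simp only [g, L, sinh_log_sqrt_sq hq (sqrt_nonneg _), r3PrimeMinor_eq_zero hq]
  have hLs : L < a + √(1 + a ^ 2) := by
    refine (hg.lt_iff_gt hs hL).1 ?_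
    simpa only [g, hsinh, hgL] using r3PrimeMinor_sq_neg ha.ne'
  exact mul_pos_iff_of_strictMonoOn_of_strictAntiOn hf hg hL hs hl hfs hgL hLs

theorem r3PrimeMinor_ne_zero_of_degenerate {a l : ℝ} (ha : a ≠ 0) (hl : 0 < l)
    (h : (sinh (log l) ^ 2 - a ^ 2) * (a * (l - 1 / l)) = 0) :
    r3PrimeMinor a (sinh (log l) ^ 2) ≠ 0 := by
  rcases mul_eq_zero.1 h with h | h
  · rw [sub_eq_zero.1 h]
    exact (r3PrimeMinor_sq_neg ha).ne
  · have : sinh (log l) = 0 := by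
      rw [sinh_log hl, ← one_div, (mul_eq_zero.1 h).resolve_left ha, zero_div]
    simp [this, r3PrimeMinor, ha]

/-- Proposition 4.7 (2): for `α > 0` and `λ ≥ 1`, the metric Lie algebra
`(r'_{3,α}, ⟨·,·⟩_λ)` has a solution of the Gauss equation in codimension 1 if and
only if `√((1 + 2α² + 2√(1+α²+α⁴))/3) < λ < α + √(1+α²)`. -/
theorem r3_prime_alpha_gauss_solvable_iff (a l : ℝ) (ha : 0 < a) (hl : 1 ≤ l) :
    GaussSolvable (-a ^ 2 - (1/4) * (l - 1/l) * (3*l + 1/l))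
        (-a ^ 2 + (1/4) * (l - 1/l) * (l + 3/l))
        (-a ^ 2 + (1/4) * (l - 1/l) ^ 2) (a * (l - 1/l)) 0 0 ↔
      Real.sqrt ((1 + 2 * a ^ 2 + 2 * Real.sqrt (1 + a ^ 2 + a ^ 4)) / 3) < l ∧
        l < a + Real.sqrt (1 + a ^ 2) := by
  have hl₀ : 0 < l := one_pos.trans_le hl
  have hR₂₃₂₃ : -a ^ 2 + 1 / 4 * (l - 1 / l) ^ 2 = sinh (log l) ^ 2 - a ^ 2 := by
    rw [sinh_log hl₀]
    ring
  rw [hR₂₃₂₃, ← r3Prime_curvature_pos_iff ha hl, ← r3Prime_curvature_minor_eq hl₀]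
  refine ⟨fun h ↦ h.pos_or_degenerate.resolve_right ?_, gaussSolvable_of_pos⟩
  rintro ⟨hD, hR⟩
  rw [r3Prime_curvature_minor_eq hl₀] at hD
  exact r3PrimeMinor_ne_zero_of_degenerate ha.ne' hl₀ hR hD
end

section
/- Let u,v ∈ ℝ with u + v > 0 and v ≠ u. The Gauss equation in codimension 1 with curvature components R_{1212} = (1/4)(1 − u² + 2(v−1)u), R_{1313} = (1/4)(1 − u² − 2(v−1)u), R_{2323} = −(1/4)(1 − u² − 2(v−1)), R_{1213} = R_{1223} = R_{1323} = 0 (these are the curvature components of a 3-dimensional simple metric Lie algebra in its Milnor frame with parameters u,v) has a solution if and only if one of the following holds: (i) u = 0 and 2(v−1) > 1; (ii) 0 < |u| ≤ 1 and either 1 − u² < 2(v−1) < |(1−u²)/u| or 2(v−1) < −|(1−u²)/u|; (iii) |u| > 1 and either |2(v−1)| < |(1−u²)/u| or 2(v−1) < 1 − u². -/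
lemma gauss_iff (p q r : ℝ) :
    GaussSolvable r q p 0 0 0 ↔ 0 < p * q * r ∨ (q * r = 0 ∧ p * r = 0 ∧ p * q = 0) := by
  constructor
  · rintro ⟨a, b, c, d, e, f, h1, h2, h3, h4, h5, h6⟩
    set D := a*d*f + 2*(b*c*e) - a*e^2 - d*c^2 - f*b^2 with hD
    have hqr : q * r = a * D := by
      rw [← h1, ← h2, hD]; linear_combination (a*e - c*b) * h4
    have hpr : p * r = d * D := by
      rw [← h1, ← h3, hD]; linear_combination (b*e - c*d) * h5
    have hpq : p * q = f * D := by
      rw [← h2, ← h3, hD]; linear_combination (b*f - c*e) * h6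
    have hpqr : p * q * r = D ^ 2 := by
      rw [← h1, ← h2, ← h3, hD]
      linear_combination ((d*f - e^2)*(a*e - c*b) - 2*(b*e - c*d)*(b*f - c*e)) * h4 +
        ((a*f - c^2)*(b*e - c*d)) * h5 + ((a*d - b^2)*(b*f - c*e)) * h6
    rcases eq_or_ne D 0 with hD0 | hD0
    · exact Or.inr ⟨by rw [hqr, hD0, mul_zero], by rw [hpr, hD0, mul_zero],
        by rw [hpq, hD0, mul_zero]⟩
    · exact Or.inl (hpqr ▸ by positivity)
  · rintro (hpos | ⟨hqr, hpr, hpq⟩)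
    · set t := Real.sqrt (p * q * r) with ht
      have ht0 : 0 < t := Real.sqrt_pos.mpr hpos
      have ht2 : t ^ 2 = p * q * r := Real.sq_sqrt hpos.le
      refine ⟨q*r/t, 0, 0, p*r/t, 0, p*q/t, ?_, ?_, ?_, by ring, by ring, by ring⟩
      · field_simp
        linear_combination (-r) * ht2
      · field_simp
        linear_combination (-q) * ht2
      · field_simp
        linear_combination (-p) * ht2
    · -- at most one of p, q, r is nonzero
      rcases mul_eq_zero.mp hqr with hq | hr
      · rcases mul_eq_zero.mp hpr with hp | hr
        · exact ⟨r, 0, 0, 1, 0, 0, by ring, by rw [hq]; ring, by rw [hp]; ring,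
            by ring, by ring, by ring⟩
        · exact ⟨0, 0, 0, p, 0, 1, by rw [hr]; ring, by rw [hq]; ring, by ring,
            by ring, by ring, by ring⟩
      · rcases mul_eq_zero.mp hpq with hp | hq
        · exact ⟨q, 0, 0, 0, 0, 1, by rw [hr]; ring, by ring, by rw [hp]; ring,
            by ring, by ring, by ring⟩
        · exact ⟨0, 0, 0, p, 0, 1, by rw [hr]; ring, by rw [hq]; ring, by ring,
            by ring, by ring, by ring⟩

lemma core (u w : ℝ) (hu : u ≠ 0) :
    0 < (w - (1 - u^2)) * ((1 - u^2)^2 - w^2 * u^2) ↔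
      (|u| ≤ 1 ∧ ((1 - u^2 < w ∧ w < |(1-u^2)/u|) ∨ w < -|(1-u^2)/u|)) ∨
      (1 < |u| ∧ (|w| < |(1-u^2)/u| ∨ w < 1 - u^2)) := by
  have hm : 0 < |u| := abs_pos.mpr hu
  have hmu : u^2 = |u|^2 := (sq_abs u).symm
  have habs : |(1-u^2)/u| = |1-u^2| / |u| := abs_div _ _
  set m := |u| with hmdef
  rw [habs, hmu]
  set s := 1 - m^2 with hsdef
  clear_value m
  rcases le_or_gt m 1 with h1 | h1
  · -- s ≥ 0 case
    have hs0 : 0 ≤ s := by nlinarith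
    rw [abs_of_nonneg hs0]
    have hm1 : ¬ (1 < m) := not_lt.mpr h1
    simp only [hm1, false_and, or_false]
    constructor
    · intro hP
      refine ⟨h1, ?_⟩
      rcases lt_or_ge s w with hw | hw
      · left
        refine ⟨hw, ?_⟩
        have h2 : 0 < s^2 - w^2*m^2 := by nlinarith
        rw [lt_div_iff₀ hm]
        nlinarith
      · right
        have hws : w < s := by
          rcases lt_or_eq_of_le hw with h | h
          · exact h
          · exfalso; rw [h] at hP; nlinarith
        have h2 : s^2 - w^2*m^2 < 0 := by nlinarith
        rw [show -(s/m) = (-s)/m by ring, lt_div_iff₀ hm]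
        by_contra hcon
        push_neg at hcon
        have hb : 0 ≤ s + w*m := by linarith
        have hwm : w*m < s := by
          rcases le_or_gt 0 w with hw0 | hw0
          · nlinarith
          · nlinarith
        nlinarith [mul_nonneg (by linarith : (0:ℝ) ≤ s - w*m) hb]
    · rintro ⟨-, (⟨hw, hw2⟩ | hw)⟩
      · rw [lt_div_iff₀ hm] at hw2
        have hwpos : 0 < w := lt_of_le_of_lt hs0 hw
        have hwm0 : 0 < w*m := mul_pos hwpos hm
        have h2 : 0 < s^2 - w^2*m^2 := by
          nlinarith [mul_pos (show (0:ℝ) < s - w*m by linarith) (show (0:ℝ) < s + w*m by linarith)]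
        have h3 : 0 < w - s := by linarith
        exact mul_pos h3 h2
      · rw [show -(s/m) = (-s)/m by ring, lt_div_iff₀ hm] at hw
        have hwneg : w < 0 := by nlinarith
        have h2 : s^2 - w^2*m^2 < 0 := by nlinarith
        have h3 : w - s < 0 := by nlinarith
        exact mul_pos_of_neg_of_neg h3 h2
  · -- s < 0 case
    have hs0 : s < 0 := by nlinarith
    rw [abs_of_neg hs0]
    have hm1 : ¬ (m ≤ 1) := not_le.mpr h1
    simp only [hm1, false_and, false_or]
    constructor
    · intro hP
      refine ⟨h1, ?_⟩
      rcases lt_or_ge w s with hw | hw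
      · exact Or.inr hw
      · left
        have hws : s < w := by
          rcases lt_or_eq_of_le hw with h | h
          · exact h
          · exfalso; rw [← h] at hP; nlinarith
        have h2 : 0 < s^2 - w^2*m^2 := by nlinarith
        rw [abs_lt]
        constructor
        · rw [show -(-s/m) = s/m by ring, div_lt_iff₀ hm]
          nlinarith
        · rw [lt_div_iff₀ hm]
          nlinarith
    · rintro ⟨-, (habs2 | hw)⟩
      · rw [abs_lt, show -(-s/m) = s/m by ring, div_lt_iff₀ hm, lt_div_iff₀ hm] at habs2
        obtain ⟨ha, hb⟩ := habs2
        have hws : s < w := by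
          by_contra hcon
          push_neg at hcon
          nlinarith [mul_le_mul_of_nonneg_right hcon hm.le,
            mul_neg_of_neg_of_pos hs0 (show (0:ℝ) < m - 1 by linarith)]
        have h2 : 0 < s^2 - w^2*m^2 := by
          nlinarith [mul_pos_of_neg_of_neg (show s - w*m < 0 by linarith)
            (show s + w*m < 0 by linarith)]
        exact mul_pos (by linarith : (0:ℝ) < w - s) h2
      · have h3 : w - s < 0 := by linarith
        have hwm : w*m < s := by
          nlinarith [mul_neg_of_neg_of_pos (show w < 0 by linarith)
            (show (0:ℝ) < m - 1 by linarith)]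
        have h2 : s^2 - w^2*m^2 < 0 := by
          nlinarith [mul_pos (show (0:ℝ) < s - w*m by linarith)
            (show (0:ℝ) < -(s + w*m) by linarith)]
        exact mul_pos_of_neg_of_neg h3 h2

/-- Proposition 4.8: solvability of the Gauss equation in codimension 1 for a
3-dimensional simple metric Lie algebra with Milnor frame parameters `u`, `v`. -/
theorem simple_gauss_solvable_iff (u v : ℝ) (huv : u + v > 0) (hne : v ≠ u) :
    GaussSolvable ((1/4) * (1 - u ^ 2 + 2 * (v - 1) * u))
        ((1/4) * (1 - u ^ 2 - 2 * (v - 1) * u))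
        (-(1/4) * (1 - u ^ 2 - 2 * (v - 1))) 0 0 0 ↔
      (u = 0 ∧ 2 * (v - 1) > 1) ∨
      (0 < |u| ∧ |u| ≤ 1 ∧
        ((1 - u ^ 2 < 2 * (v - 1) ∧ 2 * (v - 1) < |(1 - u ^ 2) / u|) ∨
          2 * (v - 1) < -|(1 - u ^ 2) / u|)) ∨
      (|u| > 1 ∧
        (|2 * (v - 1)| < |(1 - u ^ 2) / u| ∨ 2 * (v - 1) < 1 - u ^ 2)) := by
  rw [gauss_iff]
  have key : 1 - u^2 = 0 → 2*(v-1) = 0 → False := by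
    intro hs hw
    have hv : v = 1 := by linarith
    have h2 : (1-u)*(1+u) = 0 := by linear_combination hs
    rcases mul_eq_zero.mp h2 with h | h
    · exact hne (by rw [hv]; linarith)
    · linarith
  have main : 0 < -(1/4) * (1 - u ^ 2 - 2 * (v - 1)) *
        ((1/4) * (1 - u ^ 2 - 2 * (v - 1) * u)) *
        ((1/4) * (1 - u ^ 2 + 2 * (v - 1) * u)) ↔
      (u = 0 ∧ 2 * (v - 1) > 1) ∨
      (0 < |u| ∧ |u| ≤ 1 ∧
        ((1 - u ^ 2 < 2 * (v - 1) ∧ 2 * (v - 1) < |(1 - u ^ 2) / u|) ∨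
          2 * (v - 1) < -|(1 - u ^ 2) / u|)) ∨
      (|u| > 1 ∧
        (|2 * (v - 1)| < |(1 - u ^ 2) / u| ∨ 2 * (v - 1) < 1 - u ^ 2)) := by
    have hprod : -(1/4) * (1 - u ^ 2 - 2 * (v - 1)) *
        ((1/4) * (1 - u ^ 2 - 2 * (v - 1) * u)) *
        ((1/4) * (1 - u ^ 2 + 2 * (v - 1) * u)) =
        (1/64) * ((2*(v-1) - (1 - u^2)) * ((1 - u^2)^2 - (2*(v-1))^2 * u^2)) := by ring
    rw [hprod]
    have h64 : ∀ X : ℝ, 0 < (1/64) * X ↔ 0 < X := by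
      intro X; constructor <;> intro h <;> linarith
    rw [h64]
    rcases eq_or_ne u 0 with hu | hu
    · subst hu
      norm_num
    · rw [core u (2*(v-1)) hu]
      have habs0 : 0 < |u| := abs_pos.mpr hu
      constructor
      · rintro (⟨h1, h2⟩ | ⟨h1, h2⟩)
        · exact Or.inr (Or.inl ⟨habs0, h1, h2⟩)
        · exact Or.inr (Or.inr ⟨h1, h2⟩)
      · rintro (⟨h1, -⟩ | ⟨-, h1, h2⟩ | ⟨h1, h2⟩)
        · exact absurd h1 hu
        · exact Or.inl ⟨h1, h2⟩
        · exact Or.inr ⟨h1, h2⟩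
  constructor
  · rintro (hpos | ⟨hqr, hpr, hpq⟩)
    · exact main.mp hpos
    · exfalso
      rcases mul_eq_zero.mp hqr with hq | hr
      · rcases mul_eq_zero.mp hpr with hp | hr
        · -- q = 0, p = 0
          have hw : 2*(v-1) = 1-u^2 := by linarith
          have h2 : (1-u^2)*(1-u) = 0 := by linear_combination 4*hq + u*hw
          rcases mul_eq_zero.mp h2 with hs | hu1
          · exact key hs (by linarith)
          · have hs : 1-u^2 = 0 := by linear_combination (1+u)*hu1
            exact key hs (by linarith)
        · -- q = 0, r = 0
          have hs : 1-u^2 = 0 := by linarith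
          have hwu : 2*(v-1)*u = 0 := by linarith
          rcases mul_eq_zero.mp hwu with hw | hu0
          · exact key hs hw
          · rw [hu0] at hs; norm_num at hs
      · rcases mul_eq_zero.mp hpq with hp | hq
        · -- r = 0, p = 0
          have hw : 2*(v-1) = 1-u^2 := by linarith
          have h2 : (1-u^2)*(1+u) = 0 := by linear_combination 4*hr - u*hw
          rcases mul_eq_zero.mp h2 with hs | hu1
          · exact key hs (by linarith)
          · have hs : 1-u^2 = 0 := by linear_combination (1-u)*hu1
            exact key hs (by linarith)
        · -- r = 0, q = 0
          have hs : 1-u^2 = 0 := by linarith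
          have hwu : 2*(v-1)*u = 0 := by linarith
          rcases mul_eq_zero.mp hwu with hw | hu0
          · exact key hs hw
          · rw [hu0] at hs; norm_num at hs
  · intro h
    exact Or.inl (main.mpr h)
end
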